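/- Let A, B ∈ M_{k×n}(ℝ) with rank(A) = k and with QR decomposition A = L(A)π(A). There exist δ(n) > 0 and C(n) such that if |L(A)⁻¹(A − B)| ≤ δ for δ < δ(n), then B has rank k, |L(A)⁻¹L(B) − I_k| ≤ C(n)δ, and |π(A) − π(B)| ≤ C(n)δ. -/

import Mathlib

/-!
Multiplying by `L⁻¹` reduces everything to the case `L = 1`: then `Q := L⁻¹ B` lies within `δ`
of `P`, whose rows are orthonormal, so `S := Q Qᵀ - 1` has norm `O(√k δ)`. A lower triangular
`T = 1 + X` with `T Tᵀ = Q Qᵀ` is obtained as the fixed point of the contraction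
`X ↦ lowerHalf (S - X Xᵀ)` near `0`, so that `‖T - 1‖ = O(√k δ)`. Then `Q = T (T⁻¹ Q)` is the QR
decomposition of `Q`, the one of `B` is `(L T) (T⁻¹ Q)`, and `T (P - T⁻¹ Q) = X P + (P - Q)`
bounds `‖P - T⁻¹ Q‖`.
-/

/-- Frobenius norm of a real matrix. -/
noncomputable def frob {k l : ℕ} (M : Matrix (Fin k) (Fin l) ℝ) : ℝ :=
  Real.sqrt (∑ i, ∑ j, (M i j) ^ 2)

open Matrix

attribute [local instance] Matrix.frobeniusNormedAddCommGroup

theorem frob_eq_frobenius_norm {k l : ℕ} (M : Matrix (Fin k) (Fin l) ℝ) : frob M = ‖M‖ := by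
  simp [frob, frobenius_norm_def, Real.sqrt_eq_rpow]

namespace Matrix

variable {m n : Type*}

section FrobeniusNorm

variable [Fintype m] [Fintype n]

theorem norm_apply_le_frobenius_norm (M : Matrix m n ℝ) (i : m) (j : n) : ‖M i j‖ ≤ ‖M‖ :=
  (PiLp.norm_apply_le (WithLp.toLp 2 (M i)) j).trans
    (PiLp.norm_apply_le (WithLp.toLp 2 fun i => WithLp.toLp 2 (M i)) i)

theorem frobenius_norm_sq_eq_trace (M : Matrix m n ℝ) : ‖M‖ ^ 2 = (M * Mᵀ).trace := by
  rw [frobenius_norm_def, ← Real.sqrt_eq_rpow, Real.sq_sqrt (by positivity)]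
  simp [trace, mul_apply, sq]

theorem frobenius_norm_eq_sqrt_card_of_mul_transpose_eq_one [DecidableEq m] {P : Matrix m n ℝ}
    (hP : P * Pᵀ = 1) : ‖P‖ = √(Fintype.card m) := by
  rw [← Real.sqrt_sq (norm_nonneg P), frobenius_norm_sq_eq_trace, hP, trace_one]

theorem rank_eq_card_of_mul_transpose_eq_one [DecidableEq m] {P : Matrix m n ℝ}
    (hP : P * Pᵀ = 1) : P.rank = Fintype.card m := by
  refine le_antisymm P.rank_le_card_height ?_
  simpa [hP] using rank_mul_le_left P Pᵀ

theorem frobenius_norm_mul_transpose_sub_mul_transpose_le (X Y : Matrix m n ℝ) :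
    ‖X * Xᵀ - Y * Yᵀ‖ ≤ (‖X‖ + ‖Y‖) * ‖X - Y‖ := by
  have h : X * Xᵀ - Y * Yᵀ = X * (X - Y)ᵀ + (X - Y) * Yᵀ := by
    rw [transpose_sub, Matrix.mul_sub, Matrix.sub_mul]; abel
  calc ‖X * Xᵀ - Y * Yᵀ‖ ≤ ‖X‖ * ‖(X - Y)ᵀ‖ + ‖X - Y‖ * ‖Yᵀ‖ := by
        rw [h]
        exact (norm_add_le _ _).trans (add_le_add (frobenius_norm_mul _ _) (frobenius_norm_mul _ _))
    _ = (‖X‖ + ‖Y‖) * ‖X - Y‖ := by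
        rw [frobenius_norm_transpose, frobenius_norm_transpose]; ring

theorem frobenius_norm_mul_transpose_le (X : Matrix m n ℝ) : ‖X * Xᵀ‖ ≤ ‖X‖ * ‖X‖ :=
  (frobenius_norm_mul X Xᵀ).trans_eq (by rw [frobenius_norm_transpose])

theorem frobenius_norm_le_two_mul_of_one_add_mul_eq [DecidableEq m] {X : Matrix m m ℝ}
    {Y Z : Matrix m n ℝ} (hX : ‖X‖ ≤ 1 / 2) (h : (1 + X) * Y = Z) : ‖Y‖ ≤ 2 * ‖Z‖ := by
  have hY : Y = Z - X * Y := by rw [← h, Matrix.add_mul, Matrix.one_mul]; abel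
  have : ‖Y‖ ≤ ‖Z‖ + ‖X‖ * ‖Y‖ := by
    calc ‖Y‖ = ‖Z - X * Y‖ := congrArg _ hY
      _ ≤ ‖Z‖ + ‖X‖ * ‖Y‖ := (norm_sub_le _ _).trans (add_le_add_right (frobenius_norm_mul _ _) _)
  nlinarith [norm_nonneg Y]

end FrobeniusNorm

section LowerTriangular

variable [LinearOrder m]

theorem IsLowerTriangular.mul_apply_self [Fintype m] {R : Type*} [CommSemiring R]
    {M N : Matrix m m R} (hM : M.IsLowerTriangular) (hN : N.IsLowerTriangular) (i : m) :
    (M * N) i i = M i i * N i i := by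
  rw [mul_apply, Finset.sum_eq_single i]
  · intro l _ hl
    rcases hl.lt_or_gt with h | h
    · rw [hN h, mul_zero]
    · rw [hM h, zero_mul]
  · simp

theorem IsLowerTriangular.isUnit [Fintype m] {K : Type*} [Field K] {M : Matrix m m K}
    (hM : M.IsLowerTriangular) (hd : ∀ i, M i i ≠ 0) : IsUnit M := by
  rw [isUnit_iff_isUnit_det, det_of_isLowerTriangular M hM, isUnit_iff_ne_zero]
  exact Finset.prod_ne_zero_iff.mpr fun i _ => hd i

noncomputable def lowerHalf (M : Matrix m m ℝ) : Matrix m m ℝ :=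
  of fun i j => if j < i then M i j else if i = j then M i j / 2 else 0

theorem isLowerTriangular_lowerHalf (M : Matrix m m ℝ) : (lowerHalf M).IsLowerTriangular :=
  fun i j (h : i < j) => by simp [lowerHalf, not_lt_of_gt h, h.ne]

theorem lowerHalf_add_transpose {M : Matrix m m ℝ} (hM : M.IsSymm) :
    lowerHalf M + (lowerHalf M)ᵀ = M := by
  ext i j
  rcases lt_trichotomy i j with h | rfl | h
  · simp [lowerHalf, h, not_lt_of_gt h, h.ne, hM.apply j i]
  · simp [lowerHalf]
  · simp [lowerHalf, h, not_lt_of_gt h, h.ne]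

theorem lowerHalf_sub (M N : Matrix m m ℝ) : lowerHalf (M - N) = lowerHalf M - lowerHalf N := by
  ext i j
  simp only [lowerHalf, of_apply, sub_apply]
  split_ifs <;> ring

variable [Fintype m]

theorem frobenius_norm_lowerHalf_le (M : Matrix m m ℝ) : ‖lowerHalf M‖ ≤ ‖M‖ := by
  simp only [frobenius_norm_def]
  gcongr with i _ j _
  simp only [lowerHalf, of_apply]
  split_ifs
  · rfl
  · rw [norm_div]; norm_num
  · simp

theorem frobenius_norm_lowerHalf_sub_mul_transpose_le (S X : Matrix m m ℝ) :
    ‖lowerHalf (S - X * Xᵀ)‖ ≤ ‖S‖ + ‖X‖ * ‖X‖ :=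
  (frobenius_norm_lowerHalf_le _).trans
    ((norm_sub_le _ _).trans (add_le_add_right (frobenius_norm_mul_transpose_le X) _))

/-- For lower triangular `X`, the equation `(1 + X) * (1 + X)ᵀ = 1 + S` is equivalent to
`X = lowerHalf (S - X * Xᵀ)`, and for small `S` the right hand side is a contraction in `X`. -/
theorem exists_eq_lowerHalf_sub_mul_transpose {S : Matrix m m ℝ} (hS : ‖S‖ ≤ 1 / 8) :
    ∃ X : Matrix m m ℝ, X.IsLowerTriangular ∧ ‖X‖ ≤ 1 / 4 ∧ X = lowerHalf (S - X * Xᵀ) := by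
  set F : Matrix m m ℝ → Matrix m m ℝ := fun X => lowerHalf (S - X * Xᵀ)
  set s : Set (Matrix m m ℝ) := {X | X.IsLowerTriangular ∧ ‖X‖ ≤ 1 / 4}
  have hs : IsClosed s :=
    isClosed_setOfPred_blockTriangular.inter (isClosed_le continuous_norm continuous_const)
  have hmaps : Set.MapsTo F s s := by
    rintro X ⟨-, hX⟩
    refine ⟨isLowerTriangular_lowerHalf _, ?_⟩
    calc ‖F X‖ ≤ ‖S‖ + ‖X‖ * ‖X‖ := frobenius_norm_lowerHalf_sub_mul_transpose_le S X
      _ ≤ 1 / 4 := by nlinarith [norm_nonneg X]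
  have hF : ContractingWith (1 / 2) (hmaps.restrict F s s) := by
    refine ⟨by rw [← NNReal.coe_lt_coe]; norm_num, hmaps.lipschitzOnWith_iff_restrict.mp ?_⟩
    refine LipschitzOnWith.of_dist_le_mul fun X hX Y hY => ?_
    have hFXY : F X - F Y = lowerHalf (Y * Yᵀ - X * Xᵀ) := by
      simp only [F, ← lowerHalf_sub]; congr 1; abel
    rw [dist_eq_norm, dist_eq_norm, hFXY, norm_sub_rev X]
    calc ‖lowerHalf (Y * Yᵀ - X * Xᵀ)‖ ≤ (‖Y‖ + ‖X‖) * ‖Y - X‖ :=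
          (frobenius_norm_lowerHalf_le _).trans
            (frobenius_norm_mul_transpose_sub_mul_transpose_le _ _)
      _ ≤ (1 / 2 : NNReal) * ‖Y - X‖ := by
          push_cast; nlinarith [hX.2, hY.2, norm_nonneg (Y - X)]
  obtain ⟨X, ⟨hXl, hXn⟩, hXF, -⟩ :=
    hF.exists_fixedPoint' hs.isComplete hmaps (x := 0) (by simp [s]) (edist_ne_top _ _)
  exact ⟨X, hXl, hXn, hXF.symm⟩

theorem exists_isLowerTriangular_one_add_mul_transpose_eq {S : Matrix m m ℝ} (hS : S.IsSymm)
    (hSn : ‖S‖ ≤ 1 / 8) :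
    ∃ X : Matrix m m ℝ, X.IsLowerTriangular ∧ ‖X‖ ≤ 2 * ‖S‖ ∧ (1 + X) * (1 + X)ᵀ = 1 + S := by
  obtain ⟨X, hXl, hXn, hX⟩ := exists_eq_lowerHalf_sub_mul_transpose hSn
  have hsymm : (S - X * Xᵀ).IsSymm := hS.sub (isSymm_mul_transpose_self X)
  have hXX : X + Xᵀ = S - X * Xᵀ := by
    conv_lhs => rw [hX]
    exact lowerHalf_add_transpose hsymm
  refine ⟨X, hXl, ?_, ?_⟩
  · have : ‖X‖ ≤ ‖S‖ + ‖X‖ * ‖X‖ :=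
      (congrArg norm hX).trans_le (frobenius_norm_lowerHalf_sub_mul_transpose_le S X)
    nlinarith [norm_nonneg X]
  · calc (1 + X) * (1 + X)ᵀ = 1 + (X + Xᵀ + X * Xᵀ) := by
          rw [transpose_add, transpose_one]; noncomm_ring
      _ = 1 + S := by rw [hXX, sub_add_cancel]

end LowerTriangular

theorem exists_qr_of_frobenius_norm_sub_le [Fintype m] [LinearOrder m] [Fintype n]
    {P Q : Matrix m n ℝ} (hP : P * Pᵀ = 1) (hPQ : (2 * ‖P‖ + 1) * ‖P - Q‖ ≤ 1 / 8) :
    ∃ T : Matrix m m ℝ, ∃ P' : Matrix m n ℝ, T.IsLowerTriangular ∧ (∀ i, 0 < T i i) ∧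
      P' * P'ᵀ = 1 ∧ Q = T * P' ∧ ‖T - 1‖ ≤ 2 * ((2 * ‖P‖ + 1) * ‖P - Q‖) ∧
      ‖P - P'‖ ≤ 2 * (‖T - 1‖ * ‖P‖ + ‖P - Q‖) := by
  have hε : ‖P - Q‖ ≤ 1 := by nlinarith [norm_nonneg P, norm_nonneg (P - Q)]
  have hS : ‖Q * Qᵀ - 1‖ ≤ (2 * ‖P‖ + 1) * ‖P - Q‖ := by
    have hQ : ‖Q‖ ≤ ‖P‖ + ‖P - Q‖ := by simpa using norm_sub_le P (P - Q)
    rw [← hP]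
    refine (frobenius_norm_mul_transpose_sub_mul_transpose_le Q P).trans ?_
    rw [norm_sub_rev Q]
    nlinarith [norm_nonneg (P - Q)]
  obtain ⟨X, hXl, hXn, hX⟩ := exists_isLowerTriangular_one_add_mul_transpose_eq
    ((IsSymm.ext fun i j => by simp [mul_apply, mul_comm]).sub isSymm_one) (hS.trans hPQ)
  have hXn' : ‖X‖ ≤ 1 / 4 := by linarith
  set T := 1 + X with hT
  have hTl : T.IsLowerTriangular := blockTriangular_one.add hXl
  have hTd : ∀ i, 0 < T i i := fun i => by
    have := (abs_le.mp ((norm_apply_le_frobenius_norm X i i).trans hXn')).1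
    simp only [T, add_apply, one_apply_eq]
    linarith
  have hTu : IsUnit T.det := (isUnit_iff_isUnit_det T).mp (hTl.isUnit fun i => (hTd i).ne')
  refine ⟨T, T⁻¹ * Q, hTl, hTd, ?_, (mul_nonsing_inv_cancel_left T Q hTu).symm, ?_, ?_⟩
  · have hQQ : Q * Qᵀ = T * Tᵀ := by rw [hX, add_sub_cancel]
    calc T⁻¹ * Q * (T⁻¹ * Q)ᵀ = T⁻¹ * (Q * Qᵀ) * T⁻¹ᵀ := by
          simp only [transpose_mul, Matrix.mul_assoc]
      _ = T⁻¹ * T * (T⁻¹ * T)ᵀ := by simp only [hQQ, transpose_mul, Matrix.mul_assoc]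
      _ = 1 := by rw [nonsing_inv_mul T hTu, transpose_one, Matrix.one_mul]
  · simpa [T] using hXn.trans (by linarith [hS])
  · have hTX : T - 1 = X := add_sub_cancel_left 1 X
    have h : (1 + X) * (P - T⁻¹ * Q) = X * P + (P - Q) := by
      rw [Matrix.mul_sub, ← hT, mul_nonsing_inv_cancel_left T Q hTu, Matrix.add_mul,
        Matrix.one_mul]
      abel
    refine (frobenius_norm_le_two_mul_of_one_add_mul_eq (by linarith) h).trans ?_
    rw [hTX]
    gcongr
    exact (norm_add_le _ _).trans (add_le_add_left (frobenius_norm_mul X P) _)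

end Matrix

theorem qr_stability_general (n k : ℕ) :
    ∃ δ₀ > (0 : ℝ), ∃ C > (0 : ℝ), ∀ δ : ℝ, 0 < δ → δ < δ₀ →
      ∀ A B : Matrix (Fin k) (Fin n) ℝ,
      ∀ L : Matrix (Fin k) (Fin k) ℝ, ∀ P : Matrix (Fin k) (Fin n) ℝ,
        A.rank = k →
        (∀ i j : Fin k, i < j → L i j = 0) →
        (∀ i : Fin k, 0 < L i i) →
        IsUnit L →
        P * P.transpose = 1 →
        A = L * P →
        frob (L⁻¹ * (A - B)) ≤ δ →
        B.rank = k ∧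
        ∃ L' : Matrix (Fin k) (Fin k) ℝ, ∃ P' : Matrix (Fin k) (Fin n) ℝ,
          (∀ i j : Fin k, i < j → L' i j = 0) ∧
          (∀ i : Fin k, 0 < L' i i) ∧
          IsUnit L' ∧
          P' * P'.transpose = 1 ∧
          B = L' * P' ∧
          frob (L⁻¹ * L' - 1) ≤ C * δ ∧
          frob (P - P') ≤ C * δ := by
  have hk : 0 ≤ √(k : ℝ) := Real.sqrt_nonneg _
  refine ⟨1 / (8 * (2 * √k + 1)), by positivity, 8 * (1 + √k) ^ 2, by positivity, ?_⟩
  intro δ hδ hδ₀ A B L P _ hLtri hLdiag hLunit hP hALP hfrob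
  have hL : L.IsLowerTriangular := fun i j h => hLtri i j h
  have hLdet : IsUnit L.det := (isUnit_iff_isUnit_det L).mp hLunit
  have hPnorm : ‖P‖ = √k := by simpa using frobenius_norm_eq_sqrt_card_of_mul_transpose_eq_one hP
  have hε : ‖P - L⁻¹ * B‖ ≤ δ := by
    rwa [← nonsing_inv_mul_cancel_left L P hLdet, ← hALP, ← Matrix.mul_sub,
      ← frob_eq_frobenius_norm]
  have hsmall : (2 * ‖P‖ + 1) * ‖P - L⁻¹ * B‖ ≤ 1 / 8 := by
    rw [hPnorm]
    calc (2 * √k + 1) * ‖P - L⁻¹ * B‖ ≤ (2 * √k + 1) * (1 / (8 * (2 * √k + 1))) := by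
          gcongr; linarith
      _ = 1 / 8 := by field_simp
  obtain ⟨T, P', hTl, hTd, hP', hQ, hT1, hPP'⟩ := exists_qr_of_frobenius_norm_sub_le hP hsmall
  have hB : B = L * T * P' := by
    rw [Matrix.mul_assoc, ← hQ, mul_nonsing_inv_cancel_left L B hLdet]
  have hLT : (L * T).IsLowerTriangular := hL.mul hTl
  have hLTd : ∀ i, 0 < (L * T) i i := fun i => by
    rw [hL.mul_apply_self hTl]; exact mul_pos (hLdiag i) (hTd i)
  rw [hPnorm] at hT1 hPP'
  have hT1' : ‖T - 1‖ ≤ 2 * ((2 * √k + 1) * δ) := hT1.trans (by gcongr)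
  refine ⟨?_, L * T, P', fun i j h => hLT h, hLTd, hLT.isUnit fun i => (hLTd i).ne', hP', hB,
    ?_, ?_⟩
  · rw [hB, rank_mul_eq_right_of_isLowerTriangular _ _ hLT fun i => (hLTd i).ne',
      rank_eq_card_of_mul_transpose_eq_one hP', Fintype.card_fin]
  · rw [frob_eq_frobenius_norm, nonsing_inv_mul_cancel_left L T hLdet]
    exact hT1'.trans (by nlinarith [mul_nonneg hk hδ.le, mul_nonneg (mul_nonneg hk hk) hδ.le])
  · rw [frob_eq_frobenius_norm]
    calc ‖P - P'‖ ≤ 2 * (2 * ((2 * √k + 1) * δ) * √k + δ) :=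
          hPP'.trans (by gcongr)
      _ ≤ 8 * (1 + √k) ^ 2 * δ := by nlinarith [Real.sq_sqrt (Nat.cast_nonneg (α := ℝ) k)]

/-- Stability of the QR decomposition: if `A = L·P` is the QR decomposition of a
full-rank `A` and `|L⁻¹(A − B)| ≤ δ` is small, then `B` is full rank and its QR
factors are `C(n)δ`-close to those of `A`. -/
theorem qr_stability (n k : ℕ) (hkn : k ≤ n) :
    ∃ δ₀ > (0 : ℝ), ∃ C > (0 : ℝ), ∀ δ : ℝ, 0 < δ → δ < δ₀ →
      ∀ A B : Matrix (Fin k) (Fin n) ℝ,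
      ∀ L : Matrix (Fin k) (Fin k) ℝ, ∀ P : Matrix (Fin k) (Fin n) ℝ,
        A.rank = k →
        (∀ i j : Fin k, i < j → L i j = 0) →
        (∀ i : Fin k, 0 < L i i) →
        IsUnit L →
        P * P.transpose = 1 →
        A = L * P →
        frob (L⁻¹ * (A - B)) ≤ δ →
        B.rank = k ∧
        ∃ L' : Matrix (Fin k) (Fin k) ℝ, ∃ P' : Matrix (Fin k) (Fin n) ℝ,
          (∀ i j : Fin k, i < j → L' i j = 0) ∧
          (∀ i : Fin k, 0 < L' i i) ∧
          IsUnit L' ∧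
          P' * P'.transpose = 1 ∧
          B = L' * P' ∧
          frob (L⁻¹ * L' - 1) ≤ C * δ ∧
          frob (P - P') ≤ C * δ :=
  qr_stability_general n k
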